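/- Let μ be absolutely continuous with weakly unimodal density h, r > 1, and (q_n)_{n∈ℕ} the sequence of n-level Gersho quantizers of order r for μ. Let x₁(n) = sup q_n⁻¹(min q_n(ℝ)) (the right endpoint of the leftmost codecell of q_n) and x₂(n) = inf q_n⁻¹(max q_n(ℝ)) (the left endpoint of the rightmost codecell of q_n). Then x₁(n) → inf(supp μ) and x₂(n) → sup(supp μ) as n → ∞. -/

import Mathlib

open MeasureTheory Set Filter Topology
open scoped ENNReal NNReal

/-- The distortion (quantization error) of order `r` of a quantizer `q` for `μ`,
as an extended nonnegative real: `∫ |x - q x|^r dμ`. -/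
noncomputable def distortionE (μ : Measure ℝ) (q : ℝ → ℝ) (r : ℝ) : ℝ≥0∞ :=
  ∫⁻ x, ENNReal.ofReal (|x - q x| ^ r) ∂μ

/-- The `r`-th moment of `μ` on the set `s` about the point `a`:
`∫_s |x - a|^r dμ`. -/
noncomputable def cellMoment (μ : Measure ℝ) (r : ℝ) (s : Set ℝ) (a : ℝ) : ℝ≥0∞ :=
  ∫⁻ x in s, ENNReal.ofReal (|x - a| ^ r) ∂μ

/-- A (scalar) quantizer: a Borel measurable map `ℝ → ℝ` with countable image. -/
def IsQuantizer (q : ℝ → ℝ) : Prop :=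
  Measurable q ∧ (Set.range q).Countable

/-- An `n`-level Gersho quantizer of order `r` for `μ`:
(G1) exactly `n` codepoints; (G2) every codecell is an interval;
(G3) every codepoint is optimal for its own codecell;
(G4) every codecell contributes `D(μ,q,r)/n` to the distortion. -/
def IsGersho (μ : Measure ℝ) (r : ℝ) (n : ℕ) (q : ℝ → ℝ) : Prop :=
  IsQuantizer q ∧
  (Set.range q).encard = n ∧
  (∀ a ∈ Set.range q, (q ⁻¹' {a}).OrdConnected) ∧
  (∀ a ∈ Set.range q, ∀ b : ℝ, cellMoment μ r (q ⁻¹' {a}) a ≤ cellMoment μ r (q ⁻¹' {a}) b) ∧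
  (∀ a ∈ Set.range q, cellMoment μ r (q ⁻¹' {a}) a = distortionE μ q r / (n : ℝ≥0∞))

/-- The (topological) support of a Borel measure on `ℝ`. -/
def msupp (μ : Measure ℝ) : Set ℝ := {x | ∀ U ∈ nhds x, 0 < μ U}

/-- A probability density `h` is weakly unimodal if it is continuous on its support and
there is `l₀ > 0` such that `{x | h x ≥ l}` is a compact interval for every `l ∈ (0, l₀)`. -/
def WeaklyUnimodal (h : ℝ → ℝ) : Prop :=
  ContinuousOn h (tsupport h) ∧
  ∃ l₀ : ℝ, 0 < l₀ ∧ ∀ l : ℝ, 0 < l → l < l₀ →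
    IsCompact {x | l ≤ h x} ∧ ({x | l ≤ h x}).OrdConnected

/-- The constant `Q(r) = 2^{-r} (1+r)^{-1}`. -/
noncomputable def Qconst (r : ℝ) : ℝ := (2 : ℝ) ^ (-r) * (1 + r)⁻¹

/-- The optimal `n`-th Gersho quantization error for `μ` of order `r`. -/
noncomputable def gershoError (μ : Measure ℝ) (r : ℝ) (n : ℕ) : ℝ :=
  (⨅ q ∈ {q : ℝ → ℝ | IsGersho μ r n q}, distortionE μ q r).toReal

/-- The optimal `n`-th quantization error for `μ` of order `r`. -/
noncomputable def optError (μ : Measure ℝ) (r : ℝ) (n : ℕ) : ℝ :=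
  (⨅ q ∈ {q : ℝ → ℝ | IsQuantizer q ∧ (Set.range q).encard ≤ (n : ℕ∞)},
    distortionE μ q r).toReal

/-- The set `J = (a - b, ∞) ∩ (inf supp μ, sup supp μ)` (endpoints in the extended reals). -/
def Jset (μ : Measure ℝ) (a : EReal) (b : ℝ) : Set ℝ :=
  {z : ℝ | a - (b : EReal) < (z : EReal) ∧
    sInf ((fun t : ℝ => (t : EReal)) '' msupp μ) < (z : EReal) ∧
    (z : EReal) < sSup ((fun t : ℝ => (t : EReal)) '' msupp μ)}

/-- `J_{n,I}`: the codepoints of `q n` whose codecell lies inside `I`. -/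
def Jcells (q : ℕ → ℝ → ℝ) (I : Set ℝ) (n : ℕ) : Set ℝ :=
  {a ∈ Set.range (q n) | (q n) ⁻¹' {a} ⊆ I}

/-!
An `n`-level Gersho quantizer of order `r ≥ 1` is monotone: its codecells are disjoint
intervals, and each codepoint lies in the hull of its own codecell, since moving it towards the
cell strictly lowers the `r`-th moment of the cell. So the leftmost codecell is a lower set of
positive measure, and its right endpoint is at least `inf supp μ`. On the other hand its moment
is `D(μ, q_n, r) / n ≤ E|X|^r / n → 0`, whereas a set containing `(-∞, c)` with
`c > inf supp μ` contains balls of positive mass around two distinct support points (`μ` has no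
atoms), one of which stays at a fixed distance from any codepoint, so its moment is bounded
below. The rightmost codecell is symmetric.
-/

lemma msupp_eq_support (μ : Measure ℝ) : msupp μ = μ.support := by
  ext x
  exact (Measure.mem_support_iff_forall x).symm

lemma measure_compl_msupp (μ : Measure ℝ) : μ (msupp μ)ᶜ = 0 := by
  rw [msupp_eq_support]
  exact Measure.measure_compl_support

lemma measure_inter_msupp (μ : Measure ℝ) (s : Set ℝ) : μ (s ∩ msupp μ) = μ s :=
  measure_inter_conull (measure_compl_msupp μ)

lemma nonempty_inter_msupp {μ : Measure ℝ} {s : Set ℝ} (hs : μ s ≠ 0) :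
    (s ∩ msupp μ).Nonempty :=
  nonempty_of_measure_ne_zero (measure_inter_msupp μ s ▸ hs)

lemma Set.OrdConnected.forall_lt_of_disjoint {α : Type*} [LinearOrder α] {s t : Set α}
    (hs : s.OrdConnected) (ht : t.OrdConnected) (hst : Disjoint s t) {x y : α}
    (hx : x ∈ s) (hy : y ∈ t) (hxy : x < y) : ∀ u ∈ s, ∀ v ∈ t, u < v := by
  intro u hu v hv
  by_contra! hvu
  rcases le_or_gt y u with hyu | huy
  · exact disjoint_left.1 hst (hs.out hx hu ⟨hxy.le, hyu⟩) hy
  · exact disjoint_left.1 hst hu (ht.out hv hy ⟨hvu, huy.le⟩)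

section MonotoneExtremeFibers

variable {α β : Type*} [LinearOrder α] [ConditionallyCompleteLinearOrder β] {f : α → β}

lemma Monotone.isLowerSet_preimage_sInf_range (hf : Monotone f) (hb : BddBelow (range f)) :
    IsLowerSet (f ⁻¹' {sInf (range f)}) := fun _ y hyx hx =>
  le_antisymm ((hf hyx).trans (le_of_eq hx)) (csInf_le hb ⟨y, rfl⟩)

lemma Monotone.isUpperSet_preimage_sSup_range (hf : Monotone f) (hb : BddAbove (range f)) :
    IsUpperSet (f ⁻¹' {sSup (range f)}) := fun _ y hxy hx =>
  le_antisymm (le_csSup hb ⟨y, rfl⟩) ((le_of_eq hx.symm).trans (hf hxy))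

lemma Monotone.bddAbove_preimage_sInf_range (hf : Monotone f) (hb : BddBelow (range f))
    (hnt : (range f).Nontrivial) : BddAbove (f ⁻¹' {sInf (range f)}) := by
  obtain ⟨_, ⟨y, rfl⟩, hne⟩ := hnt.exists_ne (sInf (range f))
  exact ⟨y, fun x hx => le_of_not_gt fun hyx =>
    hne (le_antisymm ((hf hyx.le).trans (le_of_eq hx)) (csInf_le hb ⟨y, rfl⟩))⟩

lemma Monotone.bddBelow_preimage_sSup_range (hf : Monotone f) (hb : BddAbove (range f))
    (hnt : (range f).Nontrivial) : BddBelow (f ⁻¹' {sSup (range f)}) := by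
  obtain ⟨_, ⟨y, rfl⟩, hne⟩ := hnt.exists_ne (sSup (range f))
  exact ⟨y, fun x hx => le_of_not_gt fun hxy =>
    hne (le_antisymm (le_csSup hb ⟨y, rfl⟩) ((le_of_eq hx.symm).trans (hf hxy.le)))⟩

end MonotoneExtremeFibers

section CellMoment

variable {μ : Measure ℝ} {r : ℝ} {s : Set ℝ} {a : ℝ}

lemma mul_measure_le_cellMoment (hr : 0 ≤ r) {t : Set ℝ} (ht : MeasurableSet t) (hts : t ⊆ s)
    {ε : ℝ} (hε : 0 ≤ ε) (hdist : ∀ x ∈ t, ε ≤ |x - a|) :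
    ENNReal.ofReal (ε ^ r) * μ t ≤ cellMoment μ r s a :=
  calc ENNReal.ofReal (ε ^ r) * μ t = ∫⁻ _ in t, ENNReal.ofReal (ε ^ r) ∂μ :=
        (setLIntegral_const _ _).symm
    _ ≤ ∫⁻ x in t, ENNReal.ofReal (|x - a| ^ r) ∂μ :=
        setLIntegral_mono' ht fun x hx =>
          ENNReal.ofReal_le_ofReal (Real.rpow_le_rpow hε (hdist x hx) hr)
    _ ≤ cellMoment μ r s a := lintegral_mono_set hts

lemma cellMoment_add_le (hr : 1 ≤ r) (hs : MeasurableSet s) {p : ℝ}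
    (hp : ∀ x ∈ s, |x - a| = |x - p| + |p - a|) :
    cellMoment μ r s p + ENNReal.ofReal (|p - a| ^ r) * μ s ≤ cellMoment μ r s a := by
  rw [cellMoment, ← setLIntegral_const, ← lintegral_add_right _ measurable_const]
  refine setLIntegral_mono' hs fun x hx => ?_
  rw [hp x hx, ← ENNReal.ofReal_add (by positivity) (by positivity)]
  exact ENNReal.ofReal_le_ofReal (Real.add_rpow_le_rpow_add (abs_nonneg _) (abs_nonneg _) hr)

lemma cellMoment_lt_of_abs_sub_eq_add (hr : 1 ≤ r) (hs : MeasurableSet s) (hμs : μ s ≠ 0)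
    (hfin : cellMoment μ r s a ≠ ⊤) {p : ℝ} (hpa : p ≠ a)
    (hp : ∀ x ∈ s, |x - a| = |x - p| + |p - a|) :
    cellMoment μ r s p < cellMoment μ r s a := by
  have hadd := cellMoment_add_le (μ := μ) hr hs hp
  have hgap : ENNReal.ofReal (|p - a| ^ r) * μ s ≠ 0 :=
    mul_ne_zero (ENNReal.ofReal_pos.2 (Real.rpow_pos_of_pos
      (abs_pos.2 (sub_ne_zero.2 hpa)) r)).ne' hμs
  exact (ENNReal.lt_add_right (ne_top_of_le_ne_top hfin (le_self_add.trans hadd)) hgap).trans_le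
    hadd

lemma le_of_forall_le_of_cellMoment_le (hr : 1 ≤ r) (hs : MeasurableSet s) (hμs : μ s ≠ 0)
    (hfin : cellMoment μ r s a ≠ ⊤) {m : ℝ} (hmin : cellMoment μ r s a ≤ cellMoment μ r s m)
    (hsm : ∀ x ∈ s, x ≤ m) : a ≤ m := by
  by_contra! hma
  refine (cellMoment_lt_of_abs_sub_eq_add hr hs hμs hfin hma.ne fun x hx => ?_).not_ge hmin
  rw [abs_of_nonpos (by linarith [hsm x hx]), abs_of_nonpos (by linarith [hsm x hx]),
    abs_of_neg (by linarith)]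
  ring

lemma le_of_forall_ge_of_cellMoment_le (hr : 1 ≤ r) (hs : MeasurableSet s) (hμs : μ s ≠ 0)
    (hfin : cellMoment μ r s a ≠ ⊤) {m : ℝ} (hmin : cellMoment μ r s a ≤ cellMoment μ r s m)
    (hms : ∀ x ∈ s, m ≤ x) : m ≤ a := by
  by_contra! ham
  refine (cellMoment_lt_of_abs_sub_eq_add hr hs hμs hfin ham.ne' fun x hx => ?_).not_ge hmin
  rw [abs_of_nonneg (by linarith [hms x hx]), abs_of_nonneg (by linarith [hms x hx]),
    abs_of_pos (by linarith)]
  ring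

lemma exists_pos_le_cellMoment [NullSingletonClass μ] (hr : 0 ≤ r) {U : Set ℝ} (hU : IsOpen U)
    (hμU : μ U ≠ 0) : ∃ δ > 0, ∀ s, U ⊆ s → ∀ a, δ ≤ cellMoment μ r s a := by
  have hnt : (U ∩ msupp μ).Nontrivial := by
    rw [← not_subsingleton_iff]
    exact fun h => hμU (measure_inter_msupp μ U ▸ h.measure_zero μ)
  obtain ⟨y₁, ⟨hy₁U, hy₁⟩, y₂, ⟨hy₂U, hy₂⟩, hne⟩ := hnt
  set ε := dist y₁ y₂ / 4 with hε
  have hεpos : 0 < ε := by have := dist_pos.2 hne; positivity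
  set B : ℝ → Set ℝ := fun y => Metric.ball y ε ∩ U
  have hB : ∀ y ∈ U, y ∈ msupp μ → 0 < μ (B y) := fun y hyU hy =>
    hy _ (inter_mem (Metric.ball_mem_nhds y hεpos) (hU.mem_nhds hyU))
  refine ⟨ENNReal.ofReal (ε ^ r) * min (μ (B y₁)) (μ (B y₂)),
    ENNReal.mul_pos (ENNReal.ofReal_pos.2 (Real.rpow_pos_of_pos hεpos r)).ne'
      (lt_min (hB y₁ hy₁U hy₁) (hB y₂ hy₂U hy₂)).ne', fun s hUs a => ?_⟩
  -- whichever of `y₁, y₂` is farther from `a` has a whole `ε`-ball at distance `≥ ε` from `a`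
  have hfar : ∀ y, 2 * ε ≤ dist y a → ENNReal.ofReal (ε ^ r) * μ (B y) ≤ cellMoment μ r s a :=
    fun y hy => mul_measure_le_cellMoment hr (Metric.isOpen_ball.inter hU).measurableSet
      (inter_subset_right.trans hUs) hεpos.le fun x hx => by
        have := dist_triangle y x a
        have := Metric.mem_ball'.1 hx.1
        rw [← Real.dist_eq]; linarith
  rcases le_total (2 * ε) (dist y₁ a) with h₁ | h₁
  · exact (mul_le_mul_right (min_le_left _ _) _).trans (hfar y₁ h₁)
  · refine (mul_le_mul_right (min_le_right _ _) _).trans (hfar y₂ ?_)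
    linarith [dist_triangle_right y₁ y₂ a]

end CellMoment

lemma IsQuantizer.distortionE_ne_zero {μ : Measure ℝ} [NullSingletonClass μ] [NeZero μ]
    {q : ℝ → ℝ} (hq : IsQuantizer q) (r : ℝ) : distortionE μ q r ≠ 0 := by
  intro h0
  rw [distortionE, lintegral_eq_zero_iff (by have := hq.1; fun_prop)] at h0
  -- a quantizer with zero distortion would be the identity a.e., concentrating `μ` on its range
  have hfix : ∀ᵐ x ∂μ, x ∈ range q := h0.mono fun x hx => by
    by_contra hxq
    have hpos : 0 < |x - q x| := abs_pos.2 (sub_ne_zero.2 fun h => hxq ⟨x, h.symm⟩)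
    exact (ENNReal.ofReal_pos.2 (Real.rpow_pos_of_pos hpos r)).ne' hx
  obtain ⟨x, hx, hx'⟩ := (hfix.and (hq.2.ae_notMem μ)).exists
  exact hx' hx

namespace IsGersho

variable {μ : Measure ℝ} {r : ℝ} {n : ℕ} {q : ℝ → ℝ}

lemma finite_range (hG : IsGersho μ r n q) : (range q).Finite := by
  rw [← encard_ne_top_iff, hG.2.1]
  exact ENat.natCast_ne_top n

lemma ne_zero (hG : IsGersho μ r n q) : n ≠ 0 := by
  have := hG.2.1 ▸ encard_ne_zero.2 (range_nonempty q)
  exact_mod_cast this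

lemma measurableSet_cell (hG : IsGersho μ r n q) (a : ℝ) : MeasurableSet (q ⁻¹' {a}) :=
  hG.1.1 (measurableSet_singleton a)

lemma lintegral_eq_sum_cells (hG : IsGersho μ r n q) (f : ℝ → ℝ≥0∞) :
    ∫⁻ x, f x ∂μ = ∑ a ∈ hG.finite_range.toFinset, ∫⁻ x in q ⁻¹' {a}, f x ∂μ := by
  rw [← lintegral_biUnion_finset (pairwiseDisjoint_fiber q _) (fun a _ => hG.measurableSet_cell a)]
  simp only [Finite.mem_toFinset, biUnion_preimage_singleton, preimage_range, Measure.restrict_univ]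

lemma distortionE_le (hG : IsGersho μ r n q) :
    distortionE μ q r ≤ ∫⁻ x, ENNReal.ofReal (|x| ^ r) ∂μ := by
  rw [hG.lintegral_eq_sum_cells, distortionE, hG.lintegral_eq_sum_cells]
  refine Finset.sum_le_sum fun a ha => ?_
  have hmin := hG.2.2.2.1 a (hG.finite_range.mem_toFinset.1 ha) 0
  simp only [cellMoment, sub_zero] at hmin
  refine le_of_eq_of_le (setLIntegral_congr_fun (hG.measurableSet_cell a) fun x hx => ?_) hmin
  rw [show q x = a from hx]

lemma cellMoment_le (hG : IsGersho μ r n q) {a : ℝ} (ha : a ∈ range q) :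
    cellMoment μ r (q ⁻¹' {a}) a ≤ (∫⁻ x, ENNReal.ofReal (|x| ^ r) ∂μ) / n :=
  hG.2.2.2.2 a ha ▸ ENNReal.div_le_div_right hG.distortionE_le _

lemma cellMoment_ne_top (hG : IsGersho μ r n q) (hM : ∫⁻ x, ENNReal.ofReal (|x| ^ r) ∂μ ≠ ⊤)
    {a : ℝ} (ha : a ∈ range q) : cellMoment μ r (q ⁻¹' {a}) a ≠ ⊤ :=
  ne_top_of_le_ne_top (ENNReal.div_ne_top hM (by exact_mod_cast hG.ne_zero)) (hG.cellMoment_le ha)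

lemma measure_cell_ne_zero [NullSingletonClass μ] [NeZero μ] (hG : IsGersho μ r n q) {a : ℝ}
    (ha : a ∈ range q) : μ (q ⁻¹' {a}) ≠ 0 := by
  intro h0
  have hmom := hG.2.2.2.2 a ha
  rw [cellMoment, Measure.restrict_eq_zero.2 h0, lintegral_zero_measure, eq_comm,
    ENNReal.div_eq_zero_iff] at hmom
  exact hmom.elim (hG.1.distortionE_ne_zero r) (ENNReal.natCast_ne_top n)

lemma nontrivial_range (hG : IsGersho μ r n q) (hn : 2 ≤ n) : (range q).Nontrivial :=
  one_lt_encard_iff_nontrivial.1 (hG.2.1 ▸ by exact_mod_cast hn)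

variable [NullSingletonClass μ] [NeZero μ]

lemma le_of_forall_mem_cell_le (hG : IsGersho μ r n q) (hr : 1 ≤ r)
    (hM : ∫⁻ x, ENNReal.ofReal (|x| ^ r) ∂μ ≠ ⊤) {a m : ℝ} (ha : a ∈ range q)
    (hm : ∀ x ∈ q ⁻¹' {a}, x ≤ m) : a ≤ m :=
  le_of_forall_le_of_cellMoment_le hr (hG.measurableSet_cell a) (hG.measure_cell_ne_zero ha)
    (hG.cellMoment_ne_top hM ha) (hG.2.2.2.1 a ha m) hm

lemma le_of_forall_mem_cell_ge (hG : IsGersho μ r n q) (hr : 1 ≤ r)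
    (hM : ∫⁻ x, ENNReal.ofReal (|x| ^ r) ∂μ ≠ ⊤) {a m : ℝ} (ha : a ∈ range q)
    (hm : ∀ x ∈ q ⁻¹' {a}, m ≤ x) : m ≤ a :=
  le_of_forall_ge_of_cellMoment_le hr (hG.measurableSet_cell a) (hG.measure_cell_ne_zero ha)
    (hG.cellMoment_ne_top hM ha) (hG.2.2.2.1 a ha m) hm

theorem monotone (hG : IsGersho μ r n q) (hr : 1 ≤ r)
    (hM : ∫⁻ x, ENNReal.ofReal (|x| ^ r) ∂μ ≠ ⊤) : Monotone q := by
  intro x y hxy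
  by_contra! hlt
  have hsep : ∀ u ∈ q ⁻¹' {q x}, ∀ v ∈ q ⁻¹' {q y}, u < v :=
    (hG.2.2.1 _ ⟨x, rfl⟩).forall_lt_of_disjoint (hG.2.2.1 _ ⟨y, rfl⟩)
      ((disjoint_singleton.2 hlt.ne').preimage q) rfl rfl
      (hxy.lt_of_ne (by rintro rfl; exact hlt.ne rfl))
  refine hlt.not_ge (hG.le_of_forall_mem_cell_ge hr hM ⟨y, rfl⟩ fun v hv => ?_)
  exact hG.le_of_forall_mem_cell_le hr hM ⟨x, rfl⟩ fun u hu => (hsep u hu v hv).le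

lemma leftmost_cell (hG : IsGersho μ r n q) (hr : 1 ≤ r)
    (hM : ∫⁻ x, ENNReal.ofReal (|x| ^ r) ∂μ ≠ ⊤) (hn : 2 ≤ n) :
    IsLowerSet (q ⁻¹' {sInf (range q)}) ∧ BddAbove (q ⁻¹' {sInf (range q)}) ∧
      μ (q ⁻¹' {sInf (range q)}) ≠ 0 :=
  ⟨(hG.monotone hr hM).isLowerSet_preimage_sInf_range hG.finite_range.bddBelow,
    (hG.monotone hr hM).bddAbove_preimage_sInf_range hG.finite_range.bddBelow
      (hG.nontrivial_range hn),
    hG.measure_cell_ne_zero ((range_nonempty q).csInf_mem hG.finite_range)⟩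

lemma rightmost_cell (hG : IsGersho μ r n q) (hr : 1 ≤ r)
    (hM : ∫⁻ x, ENNReal.ofReal (|x| ^ r) ∂μ ≠ ⊤) (hn : 2 ≤ n) :
    IsUpperSet (q ⁻¹' {sSup (range q)}) ∧ BddBelow (q ⁻¹' {sSup (range q)}) ∧
      μ (q ⁻¹' {sSup (range q)}) ≠ 0 :=
  ⟨(hG.monotone hr hM).isUpperSet_preimage_sSup_range hG.finite_range.bddAbove,
    (hG.monotone hr hM).bddBelow_preimage_sSup_range hG.finite_range.bddAbove
      (hG.nontrivial_range hn),
    hG.measure_cell_ne_zero ((range_nonempty q).csSup_mem hG.finite_range)⟩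

end IsGersho

section Endpoints

variable {μ : Measure ℝ} [NullSingletonClass μ] {r : ℝ} {C : ℕ → Set ℝ} {a : ℕ → ℝ}

lemma tendsto_sSup_of_isLowerSet (hr : 0 ≤ r)
    (hC : ∀ᶠ n in atTop, IsLowerSet (C n) ∧ BddAbove (C n) ∧ μ (C n) ≠ 0)
    (hmom : Tendsto (fun n => cellMoment μ r (C n) (a n)) atTop (𝓝 0)) :
    Tendsto (fun n => ((sSup (C n) : ℝ) : EReal)) atTop
      (𝓝 (sInf ((fun t : ℝ => (t : EReal)) '' msupp μ))) := by
  refine tendsto_order.2 ⟨fun b hb => ?_, fun b hb => ?_⟩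
  · filter_upwards [hC] with n ⟨_, hbdd, hpos⟩
    obtain ⟨y, hyC, hy⟩ := nonempty_inter_msupp hpos
    exact hb.trans_le ((sInf_le (mem_image_of_mem _ hy)).trans
      (EReal.coe_le_coe_iff.2 (le_csSup hbdd hyC)))
  · obtain ⟨_, ⟨y, hy, rfl⟩, hyb⟩ := sInf_lt_iff.1 hb
    obtain ⟨c, hyc, hcb⟩ := EReal.lt_iff_exists_real_btwn.1 hyb
    obtain ⟨δ, hδ, hδle⟩ := exists_pos_le_cellMoment (μ := μ) hr isOpen_Iio
      (hy _ (Iio_mem_nhds (EReal.coe_lt_coe_iff.1 hyc))).ne'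
    filter_upwards [hC, hmom.eventually (gt_mem_nhds hδ)] with n ⟨hlow, _, hpos⟩ hn
    obtain ⟨z, hzc, hz⟩ := not_subset.1 fun hsub => (hδle _ hsub (a n)).not_gt hn
    have hsup : sSup (C n) ≤ z := csSup_le (nonempty_of_measure_ne_zero hpos)
      fun w hw => le_of_not_ge fun hzw => hz (hlow hzw hw)
    exact (EReal.coe_le_coe_iff.2 (hsup.trans (le_of_lt hzc))).trans_lt hcb

lemma tendsto_sInf_of_isUpperSet (hr : 0 ≤ r)
    (hC : ∀ᶠ n in atTop, IsUpperSet (C n) ∧ BddBelow (C n) ∧ μ (C n) ≠ 0)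
    (hmom : Tendsto (fun n => cellMoment μ r (C n) (a n)) atTop (𝓝 0)) :
    Tendsto (fun n => ((sInf (C n) : ℝ) : EReal)) atTop
      (𝓝 (sSup ((fun t : ℝ => (t : EReal)) '' msupp μ))) := by
  refine tendsto_order.2 ⟨fun b hb => ?_, fun b hb => ?_⟩
  · obtain ⟨_, ⟨y, hy, rfl⟩, hby⟩ := lt_sSup_iff.1 hb
    obtain ⟨c, hbc, hcy⟩ := EReal.lt_iff_exists_real_btwn.1 hby
    obtain ⟨δ, hδ, hδle⟩ := exists_pos_le_cellMoment (μ := μ) hr isOpen_Ioi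
      (hy _ (Ioi_mem_nhds (EReal.coe_lt_coe_iff.1 hcy))).ne'
    filter_upwards [hC, hmom.eventually (gt_mem_nhds hδ)] with n ⟨hup, _, hpos⟩ hn
    obtain ⟨z, hcz, hz⟩ := not_subset.1 fun hsub => (hδle _ hsub (a n)).not_gt hn
    have hinf : z ≤ sInf (C n) := le_csInf (nonempty_of_measure_ne_zero hpos)
      fun w hw => le_of_not_ge fun hwz => hz (hup hwz hw)
    exact hbc.trans_le (EReal.coe_le_coe_iff.2 ((le_of_lt hcz).trans hinf))
  · filter_upwards [hC] with n ⟨_, hbdd, hpos⟩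
    obtain ⟨y, hyC, hy⟩ := nonempty_inter_msupp hpos
    exact ((EReal.coe_le_coe_iff.2 (csInf_le hbdd hyC)).trans
      (le_sSup (mem_image_of_mem _ hy))).trans_lt hb

end Endpoints

lemma tendsto_cellMoment_of_isGersho {μ : Measure ℝ} {r : ℝ} {q : ℕ → ℝ → ℝ}
    (hq : ∀ n : ℕ, 0 < n → IsGersho μ r n (q n)) (hM : ∫⁻ x, ENNReal.ofReal (|x| ^ r) ∂μ ≠ ⊤)
    {a : ℕ → ℝ} (ha : ∀ᶠ n in atTop, a n ∈ range (q n)) :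
    Tendsto (fun n => cellMoment μ r (q n ⁻¹' {a n}) (a n)) atTop (𝓝 0) := by
  have hlim : Tendsto (fun n : ℕ => (∫⁻ x, ENNReal.ofReal (|x| ^ r) ∂μ) / n) atTop (𝓝 0) := by
    simpa [div_eq_mul_inv] using
      ENNReal.Tendsto.const_mul ENNReal.tendsto_inv_nat_nhds_zero (Or.inr hM)
  refine tendsto_of_tendsto_of_tendsto_of_le_of_le' tendsto_const_nhds hlim
    (Eventually.of_forall fun _ => zero_le) ?_
  filter_upwards [eventually_gt_atTop 0, ha] with n hn han
  exact (hq n hn).cellMoment_le han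

theorem gersho_stmt_17_general (μ : Measure ℝ) [IsProbabilityMeasure μ]
    (r : ℝ) (hr : 1 < r) (hmom : Integrable (fun x => |x| ^ r) μ)
    (h : ℝ → ℝ)
    (hμ : μ = volume.withDensity (fun x => ENNReal.ofReal (h x)))
    (q : ℕ → ℝ → ℝ) (hq : ∀ n : ℕ, 0 < n → IsGersho μ r n (q n)) :
    Tendsto
      (fun n : ℕ => ((sSup ((q n) ⁻¹' {sInf (Set.range (q n))}) : ℝ) : EReal))
      atTop (nhds (sInf ((fun t : ℝ => (t : EReal)) '' msupp μ))) ∧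
    Tendsto
      (fun n : ℕ => ((sInf ((q n) ⁻¹' {sSup (Set.range (q n))}) : ℝ) : EReal))
      atTop (nhds (sSup ((fun t : ℝ => (t : EReal)) '' msupp μ))) := by
  have : NullSingletonClass μ :=
    ⟨fun _ => (hμ ▸ withDensity_absolutelyContinuous _ _ : μ ≪ volume) Real.volume_singleton⟩
  have hM : ∫⁻ x, ENNReal.ofReal (|x| ^ r) ∂μ ≠ ⊤ := hmom.lintegral_lt_top.ne
  have hG : ∀ᶠ n in atTop, IsGersho μ r n (q n) ∧ 2 ≤ n :=
    eventually_atTop.2 ⟨2, fun n hn => ⟨hq n (by omega), hn⟩⟩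
  exact ⟨tendsto_sSup_of_isLowerSet (zero_le_one.trans hr.le)
      (hG.mono fun n hn => hn.1.leftmost_cell hr.le hM hn.2)
      (tendsto_cellMoment_of_isGersho hq hM
        (hG.mono fun n hn => (range_nonempty _).csInf_mem hn.1.finite_range)),
    tendsto_sInf_of_isUpperSet (zero_le_one.trans hr.le)
      (hG.mono fun n hn => hn.1.rightmost_cell hr.le hM hn.2)
      (tendsto_cellMoment_of_isGersho hq hM
        (hG.mono fun n hn => (range_nonempty _).csSup_mem hn.1.finite_range))⟩

theorem gersho_stmt_17 (μ : Measure ℝ) [IsProbabilityMeasure μ]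
    (r : ℝ) (hr : 1 < r) (hmom : Integrable (fun x => |x| ^ r) μ)
    (h : ℝ → ℝ) (hh0 : ∀ x, 0 ≤ h x)
    (hμ : μ = volume.withDensity (fun x => ENNReal.ofReal (h x)))
    (hwu : WeaklyUnimodal h)
    (q : ℕ → ℝ → ℝ) (hq : ∀ n : ℕ, 0 < n → IsGersho μ r n (q n)) :
    Tendsto
      (fun n : ℕ => ((sSup ((q n) ⁻¹' {sInf (Set.range (q n))}) : ℝ) : EReal))
      atTop (nhds (sInf ((fun t : ℝ => (t : EReal)) '' msupp μ))) ∧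
    Tendsto
      (fun n : ℕ => ((sInf ((q n) ⁻¹' {sSup (Set.range (q n))}) : ℝ) : EReal))
      atTop (nhds (sSup ((fun t : ℝ => (t : EReal)) '' msupp μ))) :=
  gersho_stmt_17_general μ r hr hmom h hμ q hq
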